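/- arXiv:1801.05083 — 3 statements merged into one kernel-verified Lean document; each statement's English description precedes it below -/
import Mathlib

section
/- Let d ≥ 1 and let Γ ⊆ ℝ^d be a compact set. Suppose that the complement ℝ^d \ Γ has exactly two connected components W⁺ and W⁻, and that Γ equals the topological boundary of W⁺ and also equals the topological boundary of W⁻. Then Γ is connected. -/
open Set

noncomputable section

local instance : Fact ((0:ℝ) < 1) := ⟨one_pos⟩

/-- The representative in `[-1/2, 1/2)` of an element of `AddCircle 1`. -/
noncomputable def deltaRep (z : AddCircle (1:ℝ)) : ℝ :=
  ((AddCircle.equivIco 1 (-(1/2)) z : Ico (-(1/2):ℝ) (-(1/2)+1)) : ℝ)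

lemma deltaRep_mem (z : AddCircle (1:ℝ)) : deltaRep z ∈ Ico (-(1/2):ℝ) (1/2) := by
  have h := (AddCircle.equivIco 1 (-(1/2)) z).2
  refine ⟨h.1, ?_⟩
  have := h.2
  unfold deltaRep
  linarith

lemma coe_deltaRep (z : AddCircle (1:ℝ)) : ((deltaRep z : ℝ) : AddCircle (1:ℝ)) = z := by
  have := (AddCircle.equivIco 1 (-(1/2))).symm_apply_apply z
  exact this

lemma deltaRep_unique {z : AddCircle (1:ℝ)} {r : ℝ} (hr : r ∈ Ico (-(1/2):ℝ) (1/2))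
    (hz : ((r : ℝ) : AddCircle (1:ℝ)) = z) : deltaRep z = r := by
  subst hz
  unfold deltaRep
  rw [AddCircle.equivIco, QuotientAddGroup.equivIcoMod_coe]
  simp only
  rw [toIcoMod_eq_self]
  exact ⟨hr.1, by linarith [hr.2]⟩

lemma deltaRep_zero : deltaRep 0 = 0 := by
  have : (((0:ℝ)) : AddCircle (1:ℝ)) = 0 := by norm_num
  exact deltaRep_unique (by norm_num) this

lemma abs_deltaRep (z : AddCircle (1:ℝ)) : |deltaRep z| = ‖z‖ := by
  have hb : |deltaRep z| ≤ |(1:ℝ)|/2 := by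
    have := deltaRep_mem z
    rw [abs_le]
    constructor
    · simp only [abs_one]; linarith [this.1]
    · simp only [abs_one]; linarith [this.2]
  have h2 : ‖((deltaRep z : ℝ) : AddCircle (1:ℝ))‖ = |deltaRep z| :=
    (AddCircle.norm_coe_eq_abs_iff (p := 1) one_ne_zero).mpr hb
  rw [← h2, coe_deltaRep]

lemma deltaRep_add {a b : AddCircle (1:ℝ)} (ha : ‖a‖ < 1/4) (hb : ‖b‖ < 1/4) :
    deltaRep (a + b) = deltaRep a + deltaRep b := by
  have ha' : |deltaRep a| < 1/4 := by rw [abs_deltaRep]; exact ha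
  have hb' : |deltaRep b| < 1/4 := by rw [abs_deltaRep]; exact hb
  rw [abs_lt] at ha' hb'
  refine deltaRep_unique ⟨by linarith [ha'.1, hb'.1], by linarith [ha'.2, hb'.2]⟩ ?_
  have : ((deltaRep a + deltaRep b : ℝ) : AddCircle (1:ℝ))
      = ((deltaRep a : ℝ) : AddCircle (1:ℝ)) + ((deltaRep b : ℝ) : AddCircle (1:ℝ)) := rfl
  rw [this, coe_deltaRep, coe_deltaRep]

lemma continuousAt_deltaRep {z : AddCircle (1:ℝ)} (hz : ‖z‖ < 1/2) :
    ContinuousAt deltaRep z := by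
  have hne : z ≠ (((-(1/2):ℝ)) : AddCircle (1:ℝ)) := by
    intro h
    rw [h] at hz
    have h1 : ((-(1/2):ℝ) : AddCircle (1:ℝ)) = -(((1:ℝ)/2 : ℝ) : AddCircle (1:ℝ)) := by
      norm_num
    rw [h1, norm_neg] at hz
    have h2 : ‖(((1:ℝ)/2 : ℝ) : AddCircle (1:ℝ))‖ = 1/2 := by
      simpa using AddCircle.norm_half_period_eq (p := 1)
    rw [h2] at hz
    norm_num at hz
  exact continuous_subtype_val.continuousAt.comp
    (AddCircle.continuousAt_equivIco 1 (-(1/2)) hne)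

end

noncomputable section LiftSection

open Finset

variable {E : Type*} [NormedAddCommGroup E] [NormedSpace ℝ E]

/-- Sum of increments of `g` along the segment from `0` to `x`, subdivided into `n` pieces. -/
noncomputable def liftSum (g : E → AddCircle (1:ℝ)) (n : ℕ) (x : E) : ℝ :=
  ∑ j ∈ Finset.range n,
    deltaRep (g (((((j:ℝ)+1))/(n:ℝ)) • x) - g ((((j:ℝ))/(n:ℝ)) • x))

/-- `n` is a fine enough subdivision for `g` along the segment to `x`. -/
def IsFine (g : E → AddCircle (1:ℝ)) (n : ℕ) (x : E) : Prop :=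
  ∀ s t : ℝ, s ∈ Icc (0:ℝ) 1 → t ∈ Icc (0:ℝ) 1 → |s - t| ≤ 1/(n:ℝ) →
    ‖g (s • x) - g (t • x)‖ < 1/4

lemma coe_liftSum (g : E → AddCircle (1:ℝ)) {n : ℕ} (hn : 1 ≤ n) (x : E) :
    ((liftSum g n x : ℝ) : AddCircle (1:ℝ)) = g x - g 0 := by
  have hmk : ((liftSum g n x : ℝ) : AddCircle (1:ℝ))
      = ∑ j ∈ Finset.range n,
        ((deltaRep (g (((((j:ℝ)+1))/(n:ℝ)) • x) - g ((((j:ℝ))/(n:ℝ)) • x)) : ℝ)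
          : AddCircle (1:ℝ)) := by
    unfold liftSum
    exact map_sum (QuotientAddGroup.mk' (AddSubgroup.zmultiples (1:ℝ))) _ _
  rw [hmk]
  have hterm : ∀ j ∈ Finset.range n,
      ((deltaRep (g (((((j:ℝ)+1))/(n:ℝ)) • x) - g ((((j:ℝ))/(n:ℝ)) • x)) : ℝ)
          : AddCircle (1:ℝ))
      = (fun l : ℕ => g ((((l:ℝ))/(n:ℝ)) • x)) (j+1)
        - (fun l : ℕ => g ((((l:ℝ))/(n:ℝ)) • x)) j := by
    intro j _
    rw [coe_deltaRep]
    push_cast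
    ring_nf
  rw [Finset.sum_congr rfl hterm, Finset.sum_range_sub (fun l : ℕ => g ((((l:ℝ))/(n:ℝ)) • x))]
  have hn' : (n:ℝ) ≠ 0 := by positivity
  rw [div_self hn']
  norm_num

lemma sum_blocks (a : ℕ → ℝ) (n k : ℕ) :
    ∑ l ∈ Finset.range (n*k), a l = ∑ j ∈ Finset.range n, ∑ i ∈ Finset.range k, a (j*k+i) := by
  induction n with
  | zero => simp
  | succ n ih =>
    rw [Nat.succ_mul, Finset.sum_range_add, ih, Finset.sum_range_succ]

lemma liftSum_refine (g : E → AddCircle (1:ℝ)) {n : ℕ} (hn : 1 ≤ n) {x : E}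
    (hf : IsFine g n x) {k : ℕ} (hk : 1 ≤ k) :
    liftSum g (n*k) x = liftSum g n x := by
  have hnk : 1 ≤ n*k := Nat.one_le_iff_ne_zero.mpr (by positivity)
  set N := n*k with hN
  have hNpos : (0:ℝ) < (N:ℝ) := by exact_mod_cast hnk
  set z : ℕ → AddCircle (1:ℝ) := fun l => g ((((l:ℝ))/(N:ℝ)) • x) with hz
  -- norm bound on increments of z
  have hb : ∀ l l' : ℕ, l ≤ N → l' ≤ N → (l:ℤ) - l' ≤ k → (l':ℤ) - l ≤ k →
      ‖z l - z l'‖ < 1/4 := by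
    intro l l' hl hl' hd hd'
    apply hf
    · constructor
      · positivity
      · rw [div_le_one hNpos]; exact_mod_cast hl
    · constructor
      · positivity
      · rw [div_le_one hNpos]; exact_mod_cast hl'
    · rw [div_sub_div_same, abs_div, abs_of_pos hNpos, div_le_div_iff₀ hNpos (by positivity)]
      have h1 : |(l:ℝ) - l'| ≤ (k:ℝ) := by
        rw [abs_le]
        constructor
        · have : ((l':ℤ):ℝ) - ((l:ℤ):ℝ) ≤ ((k:ℤ):ℝ) := by exact_mod_cast hd'
          push_cast at this ⊢
          linarith
        · have : ((l:ℤ):ℝ) - ((l':ℤ):ℝ) ≤ ((k:ℤ):ℝ) := by exact_mod_cast hd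
          push_cast at this ⊢
          linarith
      calc |(l:ℝ) - l'| * n ≤ (k:ℝ) * n := by
            apply mul_le_mul_of_nonneg_right h1 (by positivity)
        _ = 1 * (N:ℝ) := by rw [hN]; push_cast; ring
  -- inner claim
  have claim : ∀ m : ℕ, m ≤ k → ∀ j : ℕ, j < n →
      deltaRep (z (j*k+m) - z (j*k))
        = ∑ i ∈ Finset.range m, deltaRep (z (j*k+i+1) - z (j*k+i)) := by
    intro m
    induction m with
    | zero => intro _ j _; simp [deltaRep_zero]
    | succ m ih =>
      intro hm j hj
      have hm' : m ≤ k := Nat.le_of_succ_le hm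
      have hjk : j*k + k ≤ N := by
        calc j*k + k = (j+1)*k := by ring
          _ ≤ n*k := Nat.mul_le_mul_right k hj
      have hsplit : z (j*k+(m+1)) - z (j*k)
          = (z (j*k+m+1) - z (j*k+m)) + (z (j*k+m) - z (j*k)) := by
        have : j*k+(m+1) = j*k+m+1 := by ring
        rw [this]; abel
      rw [hsplit, deltaRep_add, ih hm' j hj, Finset.sum_range_succ]
      · ring
      · apply hb <;> [skip; skip; skip; skip] <;>
          first
            | (push_cast; omega)
            | (calc j*k+m+1 ≤ j*k+k := by omega
                _ ≤ N := hjk)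
            | (calc j*k+m ≤ j*k+k := by omega
                _ ≤ N := hjk)
      · apply hb
        · calc j*k+m ≤ j*k+k := by omega
            _ ≤ N := hjk
        · calc j*k ≤ j*k+k := by omega
            _ ≤ N := hjk
        · push_cast; omega
        · push_cast; omega
  -- rewrite coarse terms
  have hterm : ∀ j ∈ Finset.range n,
      deltaRep (g (((((j:ℝ)+1))/(n:ℝ)) • x) - g ((((j:ℝ))/(n:ℝ)) • x))
        = ∑ i ∈ Finset.range k, deltaRep (z (j*k+i+1) - z (j*k+i)) := by
    intro j hj
    rw [Finset.mem_range] at hj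
    have hkR : (k:ℝ) ≠ 0 := by
      have : 0 < k := hk
      positivity
    have e1 : (((j:ℝ))/(n:ℝ)) = (((j*k : ℕ):ℝ))/(N:ℝ) := by
      rw [hN]; push_cast
      field_simp
    have e2 : ((((j:ℝ)+1))/(n:ℝ)) = (((j*k+k : ℕ):ℝ))/(N:ℝ) := by
      rw [hN]; push_cast
      field_simp
    rw [e1, e2]
    have := claim k le_rfl j hj
    have hjkk : j*k + k = j*k + k := rfl
    rw [← this]
  calc liftSum g N x
      = ∑ l ∈ Finset.range N, deltaRep (z (l+1) - z l) := by
        unfold liftSum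
        refine Finset.sum_congr rfl fun l _ => ?_
        have hcast : ((l:ℝ)+1) = ((l+1:ℕ):ℝ) := by push_cast; ring
        rw [hcast]
    _ = ∑ j ∈ Finset.range n, ∑ i ∈ Finset.range k,
          deltaRep (z (j*k+i+1) - z (j*k+i)) :=
        sum_blocks (fun l => deltaRep (z (l+1) - z l)) n k
    _ = liftSum g n x := (Finset.sum_congr rfl hterm).symm

end LiftSection

noncomputable section LiftMain

open Finset Metric

variable {E : Type*} [NormedAddCommGroup E] [NormedSpace ℝ E] [ProperSpace E]

lemma exists_fine (g : E → AddCircle (1:ℝ)) (hg : Continuous g) (x : E) :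
    ∃ n : ℕ, 1 ≤ n ∧ ∀ y ∈ Metric.ball x 1, IsFine g n y := by
  have hK : IsCompact ((Icc (0:ℝ) 1) ×ˢ (Metric.closedBall x 1)) :=
    isCompact_Icc.prod (isCompact_closedBall x 1)
  have hF : Continuous (fun p : ℝ × E => g (p.1 • p.2)) :=
    hg.comp (continuous_fst.smul continuous_snd)
  have huc := hK.uniformContinuousOn_of_continuous hF.continuousOn
  rw [Metric.uniformContinuousOn_iff] at huc
  obtain ⟨δ, hδ, hucd⟩ := huc (1/4) (by norm_num)
  obtain ⟨n, hn⟩ := exists_nat_one_div_lt hδ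
  refine ⟨n+1, Nat.le_add_left 1 n, ?_⟩
  intro y hy s t hs ht hst
  have hyc : y ∈ Metric.closedBall x 1 := Metric.ball_subset_closedBall hy
  have h1 : (s, y) ∈ (Icc (0:ℝ) 1) ×ˢ (Metric.closedBall x 1) := ⟨hs, hyc⟩
  have h2 : (t, y) ∈ (Icc (0:ℝ) 1) ×ˢ (Metric.closedBall x 1) := ⟨ht, hyc⟩
  have hd : dist (s, y) (t, y) < δ := by
    rw [Prod.dist_eq]
    simp only [dist_self]
    have h3 : dist s t < δ := by
      rw [Real.dist_eq s t]
      calc |s - t| ≤ 1/((n:ℝ)+1) := by exact_mod_cast hst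
        _ < δ := hn
    exact sup_lt_iff.mpr ⟨h3, hδ⟩
  have := hucd _ h1 _ h2 hd
  simpa [dist_eq_norm] using this


theorem exists_addCircle_lift (g : E → AddCircle (1:ℝ)) (hg : Continuous g) :
    ∃ v : E → ℝ, Continuous v ∧ ∀ x, ((v x : ℝ) : AddCircle (1:ℝ)) = g x := by
  choose N hN1 hNf using exists_fine g hg
  have indep : ∀ (x : E) (n m : ℕ), 1 ≤ n → 1 ≤ m → IsFine g n x → IsFine g m x →
      liftSum g n x = liftSum g m x := by
    intro x n m hn hm hfn hfm
    have h1 := liftSum_refine g hn hfn hm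
    have h2 := liftSum_refine g hm hfm hn
    rw [← h1, ← h2, Nat.mul_comm]
  refine ⟨fun x => deltaRep (g 0) + liftSum g (N x) x, ?_, ?_⟩
  · rw [continuous_iff_continuousAt]
    intro x
    have hfix : ContinuousAt (fun y => deltaRep (g 0) + liftSum g (N x) y) x := by
      apply ContinuousAt.add continuousAt_const
      unfold liftSum
      apply tendsto_finset_sum
      intro j hj
      rw [Finset.mem_range] at hj
      have hn1 : (1:ℕ) ≤ N x := hN1 x
      have hinner : ContinuousAt
          (fun y => g (((((j:ℝ)+1))/((N x):ℝ)) • y) - g ((((j:ℝ))/((N x):ℝ)) • y)) x := by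
        apply ContinuousAt.sub
        · exact (hg.comp (continuous_const_smul _)).continuousAt
        · exact (hg.comp (continuous_const_smul _)).continuousAt
      apply ContinuousAt.comp ?_ hinner
      apply continuousAt_deltaRep
      have hfine := hNf x x (Metric.mem_ball_self one_pos)
      have hNpos : (0:ℝ) < ((N x):ℝ) := by exact_mod_cast hn1
      have := hfine (((j:ℝ)+1)/((N x):ℝ)) (((j:ℝ))/((N x):ℝ))
        ⟨by positivity, by
          rw [div_le_one hNpos]
          have : (j:ℝ) + 1 ≤ ((N x):ℝ) := by exact_mod_cast hj
          linarith⟩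
        ⟨by positivity, by
          rw [div_le_one hNpos]
          have : (j:ℝ) ≤ ((N x):ℝ) := by exact_mod_cast hj.le
          linarith⟩
        (by
          rw [div_sub_div_same]
          have : ((j:ℝ)+1) - j = 1 := by ring
          rw [this, abs_div, abs_one, abs_of_pos hNpos])
      linarith
    apply hfix.congr
    have hball : Metric.ball x 1 ∈ nhds x := Metric.ball_mem_nhds x one_pos
    filter_upwards [hball] with y hy
    have h1 : IsFine g (N y) y := hNf y y (Metric.mem_ball_self one_pos)
    have h2 : IsFine g (N x) y := hNf x y hy
    rw [indep y (N x) (N y) (hN1 x) (hN1 y) h2 h1]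
  · intro x
    have hcoe : ((deltaRep (g 0) + liftSum g (N x) x : ℝ) : AddCircle (1:ℝ))
        = ((deltaRep (g 0) : ℝ) : AddCircle (1:ℝ))
          + ((liftSum g (N x) x : ℝ) : AddCircle (1:ℝ)) := rfl
    rw [hcoe, coe_deltaRep, coe_liftSum g (hN1 x) x]
    abel

end LiftMain

section Glue

variable {X : Type*} [TopologicalSpace X]

lemma int_valued_eq_on_preconnected {A : Set X} (hA : IsPreconnected A) {w : X → ℝ}
    (hw : Continuous w) (hint : ∀ y ∈ A, ∃ m : ℤ, w y = m) {p s : X}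
    (hp : p ∈ A) (hs : s ∈ A) : w p = w s := by
  have hS : IsPreconnected (w '' A) := hA.image w hw.continuousOn
  by_contra hne
  obtain ⟨mp, hmp⟩ := hint p hp
  obtain ⟨ms, hms⟩ := hint s hs
  -- wlog
  have key : ∀ a b : X, a ∈ A → b ∈ A → ∀ ma mb : ℤ, w a = ma → w b = mb →
      ma < mb → False := by
    intro a b ha hb ma mb hwa hwb hlt
    have hmem : ((ma:ℝ) + 1/2) ∈ w '' A := by
      apply hS.Icc_subset (Set.mem_image_of_mem w ha) (Set.mem_image_of_mem w hb)
      rw [hwa, hwb]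
      constructor
      · linarith
      · have : (ma:ℝ) + 1 ≤ (mb:ℝ) := by exact_mod_cast hlt
        linarith
    obtain ⟨y, hy, hwy⟩ := hmem
    obtain ⟨m, hm⟩ := hint y hy
    rw [hm] at hwy
    have : ((2*m : ℤ) : ℝ) = ((2*ma + 1 : ℤ) : ℝ) := by push_cast; linarith
    have h2 : (2*m : ℤ) = 2*ma + 1 := by exact_mod_cast this
    omega
  rcases lt_trichotomy mp ms with h | h | h
  · exact key p s hp hs mp ms hmp hms h
  · apply hne; rw [hmp, hms, h]
  · exact key s p hs hp ms mp hms hmp h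

end Glue

section Main

lemma coe_addCircle_eq_of_sub_intCast {x y : ℝ} {m : ℤ} (h : x - y = m) :
    ((x : ℝ) : AddCircle (1:ℝ)) = ((y : ℝ) : AddCircle (1:ℝ)) := by
  have h0 : ((x - y : ℝ) : AddCircle (1:ℝ)) = 0 := by
    rw [h, AddCircle.coe_eq_zero_iff]
    exact ⟨m, by simp⟩
  have h2 : ((x - y : ℝ) : AddCircle (1:ℝ))
      = ((x : ℝ) : AddCircle (1:ℝ)) - ((y : ℝ) : AddCircle (1:ℝ)) := rfl
  rw [h2] at h0
  exact sub_eq_zero.mp h0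

lemma exists_int_of_coe_addCircle_eq {x y : ℝ}
    (h : ((x : ℝ) : AddCircle (1:ℝ)) = ((y : ℝ) : AddCircle (1:ℝ))) :
    ∃ m : ℤ, x - y = m := by
  have h2 : ((x - y : ℝ) : AddCircle (1:ℝ))
      = ((x : ℝ) : AddCircle (1:ℝ)) - ((y : ℝ) : AddCircle (1:ℝ)) := rfl
  have h0 : ((x - y : ℝ) : AddCircle (1:ℝ)) = 0 := by rw [h2, h, sub_self]
  rw [AddCircle.coe_eq_zero_iff] at h0
  obtain ⟨n, hn⟩ := h0
  exact ⟨n, by simpa [zsmul_eq_mul] using hn.symm⟩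

/-- Lemma 3.1: If `Γ ⊆ ℝ^d` is compact, its complement has exactly two connected
components `Wp` and `Wm`, and `Γ` equals the topological boundary of each of them,
then `Γ` is connected. -/
theorem stmt_0 (d : ℕ) (hd : 1 ≤ d)
    (Γ Wp Wm : Set (EuclideanSpace ℝ (Fin d)))
    (hΓ : IsCompact Γ)
    (hWp : ∃ x ∈ Γᶜ, connectedComponentIn Γᶜ x = Wp)
    (hWm : ∃ x ∈ Γᶜ, connectedComponentIn Γᶜ x = Wm)
    (hne : Wp ≠ Wm)
    (honly : ∀ x ∈ Γᶜ, connectedComponentIn Γᶜ x = Wp ∨ connectedComponentIn Γᶜ x = Wm)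
    (hbp : Γ = frontier Wp)
    (hbm : Γ = frontier Wm) :
    IsConnected Γ := by
  classical
  obtain ⟨xp, hxp, hWpe⟩ := hWp
  obtain ⟨xm, hxm, hWme⟩ := hWm
  have hΓcl : IsClosed Γ := hΓ.isClosed
  have hopen : IsOpen Γᶜ := hΓcl.isOpen_compl
  have hWpo : IsOpen Wp := hWpe ▸ hopen.connectedComponentIn
  have hWmo : IsOpen Wm := hWme ▸ hopen.connectedComponentIn
  have hWpconn : IsPreconnected Wp := hWpe ▸ isPreconnected_connectedComponentIn
  have hWmconn : IsPreconnected Wm := hWme ▸ isPreconnected_connectedComponentIn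
  have hxpW : xp ∈ Wp := hWpe ▸ mem_connectedComponentIn hxp
  have hxmW : xm ∈ Wm := hWme ▸ mem_connectedComponentIn hxm
  have hWpsub : Wp ⊆ Γᶜ := hWpe ▸ connectedComponentIn_subset _ _
  have hWmsub : Wm ⊆ Γᶜ := hWme ▸ connectedComponentIn_subset _ _
  have hdisj : ∀ z, z ∈ Wp → z ∈ Wm → False := by
    intro z hzp hzm
    apply hne
    rw [← hWpe, ← hWme]
    have h1 := connectedComponentIn_eq (hWpe.symm ▸ hzp : z ∈ connectedComponentIn Γᶜ xp)
    have h2 := connectedComponentIn_eq (hWme.symm ▸ hzm : z ∈ connectedComponentIn Γᶜ xm)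
    exact h1.trans h2.symm
  have hcover : ∀ z, z ∉ Γ → z ∈ Wp ∨ z ∈ Wm := by
    intro z hz
    rcases honly z hz with h | h
    · left; rw [← h]; exact mem_connectedComponentIn hz
    · right; rw [← h]; exact mem_connectedComponentIn hz
  have hclWp : closure Wp = Wp ∪ Γ := by
    rw [hbp, hWpo.frontier_eq, Set.union_diff_cancel subset_closure]
  have hclWm : closure Wm = Wm ∪ Γ := by
    rw [hbm, hWmo.frontier_eq, Set.union_diff_cancel subset_closure]
  set A := closure Wp with hA
  set B := closure Wm with hB
  have hΓsubA : Γ ⊆ A := by rw [hclWp]; exact Set.subset_union_right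
  have hΓsubB : Γ ⊆ B := by rw [hclWm]; exact Set.subset_union_right
  have hABunion : ∀ z, z ∉ A → z ∈ B := by
    intro z hz
    by_cases hzΓ : z ∈ Γ
    · exact absurd (hΓsubA hzΓ) hz
    rcases hcover z hzΓ with h | h
    · exact absurd (subset_closure h) hz
    · exact subset_closure h
  have hABinter : A ∩ B ⊆ Γ := by
    rw [hclWp, hclWm]
    rintro z ⟨h1, h2⟩
    rcases h1 with h1 | h1
    · rcases h2 with h2 | h2
      · exact absurd (hdisj z h1 h2) not_false
      · exact h2
    · exact h1
  have hAconn : IsPreconnected A := hWpconn.closure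
  have hBconn : IsPreconnected B := hWmconn.closure
  have hΓne : Γ.Nonempty := by
    by_contra h
    rw [Set.not_nonempty_iff_eq_empty] at h
    have hfr : frontier Wp = ∅ := by rw [← hbp]; exact h
    have hclopen : IsClopen Wp := isClopen_iff_frontier_eq_empty.mpr hfr
    rcases isClopen_iff.mp hclopen with h1 | h1
    · rw [h1] at hxpW; exact hxpW
    · exact hdisj xm (h1 ▸ Set.mem_univ xm) hxmW
  refine ⟨hΓne, ?_⟩
  by_contra hnc
  rw [IsPreconnected] at hnc
  push_neg at hnc
  obtain ⟨U, V, hU, hV, hcov, hne1, hne2, hinter⟩ := hnc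
  set Γ₁ := Γ \ V with hΓ₁
  set Γ₂ := Γ ∩ V with hΓ₂
  have hΓ₂eq : Γ₂ = Γ \ U := by
    ext z
    constructor
    · rintro ⟨hzΓ, hzV⟩
      refine ⟨hzΓ, fun hzU => ?_⟩
      have : z ∈ Γ ∩ (U ∩ V) := ⟨hzΓ, hzU, hzV⟩
      rw [hinter] at this
      exact this
    · rintro ⟨hzΓ, hzU⟩
      rcases hcov hzΓ with h | h
      · exact absurd h hzU
      · exact ⟨hzΓ, h⟩
  have hΓ₁cl : IsClosed Γ₁ := hΓcl.sdiff hV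
  have hΓ₂cl : IsClosed Γ₂ := hΓ₂eq ▸ hΓcl.sdiff hU
  have hΓ₁ne : Γ₁.Nonempty := by
    obtain ⟨z, hzΓ, hzU⟩ := hne1
    refine ⟨z, hzΓ, fun hzV => ?_⟩
    have : z ∈ Γ ∩ (U ∩ V) := ⟨hzΓ, hzU, hzV⟩
    rw [hinter] at this
    exact this
  have hΓ₂ne : Γ₂.Nonempty := hne2
  have hΓ12 : Γ₁ ∪ Γ₂ = Γ := Set.diff_union_inter Γ V
  obtain ⟨u, hu0, hu1, -⟩ :=
    exists_continuous_zero_one_of_isClosed hΓ₁cl hΓ₂cl disjoint_sdiff_inter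
  have huval : ∀ z ∈ Γ, u z = 0 ∨ u z = 1 := by
    intro z hz
    rw [← hΓ12] at hz
    rcases hz with h | h
    · left; exact hu0 h
    · right; exact hu1 h
  set g : EuclideanSpace ℝ (Fin d) → AddCircle (1:ℝ) :=
    A.piecewise (fun y => ((u y : ℝ) : AddCircle (1:ℝ)))
      (fun y => ((-(u y) : ℝ) : AddCircle (1:ℝ))) with hgdef
  have huΓcoe : ∀ z ∈ Γ, ((u z : ℝ) : AddCircle (1:ℝ)) = ((-(u z) : ℝ) : AddCircle (1:ℝ)) := by
    intro z hz
    rcases huval z hz with h | h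
    · rw [h]; norm_num
    · refine coe_addCircle_eq_of_sub_intCast (m := 2) ?_
      rw [h]; norm_num
  have hgcont : Continuous g := by
    apply Continuous.piecewise
    · intro a ha
      have haΓ : a ∈ Γ := by
        have h1 : frontier A ⊆ frontier Wp := frontier_closure_subset
        rw [← hbp] at h1
        exact h1 ha
      exact huΓcoe a haΓ
    · exact (AddCircle.continuous_mk' 1).comp u.continuous
    · exact (AddCircle.continuous_mk' 1).comp u.continuous.neg
  obtain ⟨v, hvcont, hvlift⟩ := exists_addCircle_lift g hgcont
  have hA_int : ∀ y ∈ A, ∃ m : ℤ, v y - u y = m := by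
    intro y hy
    have hg : g y = ((u y : ℝ) : AddCircle (1:ℝ)) := Set.piecewise_eq_of_mem A _ _ hy
    exact exists_int_of_coe_addCircle_eq ((hvlift y).trans hg)
  have hB_int : ∀ y ∈ B, ∃ m : ℤ, v y - (-(u y)) = m := by
    intro y hy
    have hg : g y = ((-(u y) : ℝ) : AddCircle (1:ℝ)) := by
      by_cases hyA : y ∈ A
      · rw [hgdef, Set.piecewise_eq_of_mem A _ _ hyA]
        exact huΓcoe y (hABinter ⟨hyA, hy⟩)
      · exact Set.piecewise_eq_of_notMem A _ _ hyA
    exact exists_int_of_coe_addCircle_eq ((hvlift y).trans hg)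
  obtain ⟨p, hpΓ₁⟩ := hΓ₁ne
  obtain ⟨s, hsΓ₂⟩ := hΓ₂ne
  have hpΓ : p ∈ Γ := hpΓ₁.1
  have hsΓ : s ∈ Γ := hsΓ₂.1
  have e1 : v p - u p = v s - u s :=
    int_valued_eq_on_preconnected hAconn (hvcont.sub u.continuous) hA_int
      (hΓsubA hpΓ) (hΓsubA hsΓ)
  have e2 : v p - (-(u p)) = v s - (-(u s)) :=
    int_valued_eq_on_preconnected hBconn (hvcont.sub u.continuous.neg) hB_int
      (hΓsubB hpΓ) (hΓsubB hsΓ)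
  have hup : u p = 0 := hu0 hpΓ₁
  have hus : u s = 1 := hu1 hsΓ₂
  rw [hup, hus] at e1 e2
  linarith

end Main
end

section
/- Let d ≥ 1 and let U, V ⊆ ℝ^d be open, connected, nonempty sets with U ∪ V = ℝ^d. Then U ∩ V is nonempty and connected. -/
/-!
Suppose a piece `A` of `U ∩ V` has frontier outside `U ∩ V`, and take `φ : X → ℝ` equal to `0`
off `V` and to `1` off `U` (Urysohn). The functions `ψU = φ` on `A`, `0` elsewhere, and
`ψV = φ` on `A`, `1` elsewhere, are continuous on `U` and on `V` respectively and agree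
modulo `1`, so together they define a map `X → ℝ/ℤ`. On a simply connected space this map lifts
to some `L : X → ℝ`. Then `L - ψU` and `L - ψV` are integer valued, hence constant on the
connected sets `U` and `V`; but their difference is `0` on `A` and `1` on `U ∩ V \ A`.
-/

open Set

section

variable {X : Type*} [TopologicalSpace X]

theorem exists_lift_addCircle [SimplyConnectedSpace X] [LocallyPathConnectedSpace X] (p : ℝ)
    (g : C(X, AddCircle p)) : ∃ L : C(X, ℝ), ∀ x, (L x : AddCircle p) = g x := by
  obtain ⟨x₀⟩ : Nonempty X := inferInstance
  obtain ⟨e₀, he₀⟩ := QuotientAddGroup.mk_surjective (g x₀)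
  obtain ⟨L, -, hL⟩ :=
    ((AddCircle.isCoveringMap_coe p).existsUnique_continuousMap_lifts g x₀ e₀ he₀).exists
  exact ⟨L, congrFun hL⟩

theorem IsPreconnected.sub_eq_sub_of_coe_addCircle_eq {s : Set X} (hs : IsPreconnected s)
    (p : ℝ) {f₁ f₂ : X → ℝ} (hf₁ : ContinuousOn f₁ s) (hf₂ : ContinuousOn f₂ s)
    (h : ∀ x ∈ s, (f₁ x : AddCircle p) = f₂ x) {x y : X} (hx : x ∈ s) (hy : y ∈ s) :
    f₁ x - f₂ x = f₁ y - f₂ y :=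
  hs.constant_of_mapsTo (T := AddSubgroup.zmultiples p)
    (isDiscrete_iff_discreteTopology.mpr
      (inferInstanceAs (DiscreteTopology (AddSubgroup.zmultiples p))))
    (hf₁.sub hf₂)
    (fun z hz ↦ (QuotientAddGroup.eq_zero_iff _).mp (by simp [h z hz])) hx hy

theorem frontier_subset_compl_union_of_disjoint {S T : Set X} (hS : IsOpen S) (hT : IsOpen T)
    (hST : Disjoint S T) : frontier S ⊆ (S ∪ T)ᶜ := by
  rw [hS.frontier_eq]
  rintro z ⟨hzS, hzS'⟩ (hz | hz)
  exacts [hzS' hz, (hST.closure_left hT).notMem_of_mem_left hzS hz]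

theorem mem_of_frontier_subset_compl_inter [NormalSpace X] [SimplyConnectedSpace X]
    [LocallyPathConnectedSpace X] {U V A : Set X} (hUo : IsOpen U) (hVo : IsOpen V)
    (hU : IsPreconnected U) (hV : IsPreconnected V) (hUV : U ∪ V = univ)
    (hA : frontier A ⊆ (U ∩ V)ᶜ) {x y : X} (hx : x ∈ U ∩ V) (hxA : x ∈ A) (hy : y ∈ U ∩ V) :
    y ∈ A := by
  classical
  by_contra hyA
  obtain ⟨φ, hφV, hφU, -⟩ := exists_continuous_zero_one_of_isClosed hVo.isClosed_compl
    hUo.isClosed_compl (disjoint_compl_left_iff_subset.mpr (compl_subset_iff_union.mpr hUV))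
  set ψU : X → ℝ := A.piecewise φ 0
  set ψV : X → ℝ := A.piecewise φ 1
  have hψU : ContinuousOn ψU U :=
    ContinuousOn.piecewise (fun z ⟨hzU, hz⟩ ↦ hφV fun hzV ↦ hA hz ⟨hzU, hzV⟩)
      φ.continuous.continuousOn continuousOn_const
  have hψV : ContinuousOn ψV V :=
    ContinuousOn.piecewise (fun z ⟨hzV, hz⟩ ↦ hφU fun hzU ↦ hA hz ⟨hzU, hzV⟩)
      φ.continuous.continuousOn continuousOn_const
  have hψUV : ∀ z, (ψU z : AddCircle (1 : ℝ)) = ψV z := by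
    intro z
    by_cases hz : z ∈ A <;> simp [ψU, ψV, hz, AddCircle.coe_period]
  have hg : Continuous fun z ↦ (ψU z : AddCircle (1 : ℝ)) := by
    have hcoe : Continuous ((↑) : ℝ → AddCircle (1 : ℝ)) := continuous_quotient_mk'
    refine continuousOn_univ.mp (hUV ▸ ContinuousOn.union_of_isOpen
      (hcoe.comp_continuousOn hψU) ?_ hUo hVo)
    simpa only [Function.comp_def, hψUV] using hcoe.comp_continuousOn hψV
  obtain ⟨L, hL⟩ := exists_lift_addCircle 1 ⟨_, hg⟩
  have hLU := hU.sub_eq_sub_of_coe_addCircle_eq 1 L.continuous.continuousOn hψU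
    (fun z _ ↦ hL z) hx.1 hy.1
  have hLV := hV.sub_eq_sub_of_coe_addCircle_eq 1 L.continuous.continuousOn hψV
    (fun z _ ↦ (hL z).trans (hψUV z)) hx.2 hy.2
  have : ψU x = φ x := piecewise_eq_of_mem _ _ _ hxA
  have : ψV x = φ x := piecewise_eq_of_mem _ _ _ hxA
  have : ψU y = 0 := piecewise_eq_of_notMem _ _ _ hyA
  have : ψV y = 1 := piecewise_eq_of_notMem _ _ _ hyA
  linarith

theorem IsPreconnected.inter_of_union_eq_univ [NormalSpace X] [SimplyConnectedSpace X]
    [LocallyPathConnectedSpace X] {U V : Set X} (hUo : IsOpen U) (hVo : IsOpen V)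
    (hU : IsPreconnected U) (hV : IsPreconnected V) (hUV : U ∪ V = univ) :
    IsPreconnected (U ∩ V) := by
  rintro S T hSo hTo hcover ⟨x, hxUV, hxS⟩ ⟨y, hyUV, hyT⟩
  by_contra hST
  have hdisj : Disjoint (U ∩ V ∩ S) (U ∩ V ∩ T) :=
    disjoint_left.mpr fun z hzS hzT ↦ hST ⟨z, hzS.1, hzS.2, hzT.2⟩
  have hfrontier : frontier (U ∩ V ∩ S) ⊆ (U ∩ V)ᶜ := by
    refine (frontier_subset_compl_union_of_disjoint ((hUo.inter hVo).inter hSo)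
      ((hUo.inter hVo).inter hTo) hdisj).trans (compl_subset_compl.mpr fun z hz ↦ ?_)
    rcases hcover hz with h | h
    exacts [.inl ⟨hz, h⟩, .inr ⟨hz, h⟩]
  have hyS := mem_of_frontier_subset_compl_inter hUo hVo hU hV hUV hfrontier hxUV
    ⟨hxUV, hxS⟩ hyUV
  exact hST ⟨y, hyUV, hyS.2, hyT⟩

end

theorem stmt_1_general (d : ℕ)
    (U V : Set (EuclideanSpace ℝ (Fin d)))
    (hUopen : IsOpen U) (hVopen : IsOpen V)
    (hUconn : IsConnected U) (hVconn : IsConnected V)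
    (hcover : U ∪ V = Set.univ) :
    IsConnected (U ∩ V) :=
  ⟨nonempty_inter hUopen hVopen hcover hUconn.nonempty hVconn.nonempty,
    hUconn.isPreconnected.inter_of_union_eq_univ hUopen hVopen hVconn.isPreconnected hcover⟩

/-- Mayer–Vietoris step of Lemma 3.1: if `U, V ⊆ ℝ^d` are open, connected, nonempty
and `U ∪ V = ℝ^d`, then `U ∩ V` is nonempty and connected. -/
theorem stmt_1 (d : ℕ) (hd : 1 ≤ d)
    (U V : Set (EuclideanSpace ℝ (Fin d)))
    (hUopen : IsOpen U) (hVopen : IsOpen V)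
    (hUconn : IsConnected U) (hVconn : IsConnected V)
    (hcover : U ∪ V = Set.univ) :
    IsConnected (U ∩ V) :=
  stmt_1_general d U V hUopen hVopen hUconn hVconn hcover
end

section
/- Let (X, dist) be a metric space, let (K_i) be a sequence of nonempty compact connected subsets of X, and let K ⊆ X be a nonempty compact set such that the Hausdorff distance between K_i and K tends to 0 as i → ∞. Then K is connected. -/
/-!
A separation of `S` into two disjoint nonempty closed pieces `A`, `B` (compact, as `S` is)
survives in disjoint open `δ`-thickenings of `A` and `B`. Once `K i` is `δ`-close to `S` in
Hausdorff distance, `K i` lies in their union and meets both, contradicting its connectedness.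
-/

open Filter Metric Set

section Thickening

variable {X : Type*} [PseudoMetricSpace X] {s t : Set X} {δ : ℝ}

theorem subset_thickening_of_hausdorffDist_lt (h : hausdorffDist s t < δ)
    (fin : hausdorffEDist s t ≠ ⊤) : s ⊆ thickening δ t :=
  fun _ hx => mem_thickening_iff.2 (exists_dist_lt_of_hausdorffDist_lt hx h fin)

theorem subset_thickening_of_hausdorffDist_lt' (h : hausdorffDist s t < δ)
    (fin : hausdorffEDist s t ≠ ⊤) : t ⊆ thickening δ s :=
  subset_thickening_of_hausdorffDist_lt (by rwa [hausdorffDist_comm])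
    (by rwa [hausdorffEDist_comm])

theorem inter_thickening_nonempty_of_subset_thickening (hst : s ⊆ thickening δ t)
    (hs : s.Nonempty) : (t ∩ thickening δ s).Nonempty := by
  obtain ⟨x, hx⟩ := hs
  obtain ⟨y, hy, hxy⟩ := mem_thickening_iff.1 (hst hx)
  exact ⟨y, hy, mem_thickening_iff.2 ⟨x, hx, by rwa [dist_comm]⟩⟩

end Thickening

theorem IsCompact.isPreconnected_of_forall_thickening {X : Type*} [MetricSpace X] {S : Set X}
    (hS : IsCompact S)
    (hT : ∀ δ > 0, ∃ T, IsPreconnected T ∧ T ⊆ thickening δ S ∧ S ⊆ thickening δ T) :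
    IsPreconnected S := by
  rw [isPreconnected_iff_subset_of_fully_disjoint_closed hS.isClosed]
  intro u v hu hv hSuv huv
  by_contra! hsplit
  have hA : (S ∩ u).Nonempty := by
    obtain ⟨x, hxS, hxv⟩ := not_subset.1 hsplit.2
    exact ⟨x, hxS, (hSuv hxS).resolve_right hxv⟩
  have hB : (S ∩ v).Nonempty := by
    obtain ⟨x, hxS, hxu⟩ := not_subset.1 hsplit.1
    exact ⟨x, hxS, (hSuv hxS).resolve_left hxu⟩
  have hSAB : S ⊆ (S ∩ u) ∪ (S ∩ v) := fun x hx => (hSuv hx).imp (⟨hx, ·⟩) (⟨hx, ·⟩)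
  have hdisj : Disjoint (S ∩ u) (S ∩ v) := huv.mono inter_subset_right inter_subset_right
  obtain ⟨δ, hδ, hdisjδ⟩ :=
    hdisj.exists_thickenings (hS.inter_right hu) (hS.inter_right hv).isClosed
  obtain ⟨T, hTconn, hTS, hST⟩ := hT δ hδ
  have hTAB : T ⊆ thickening δ (S ∩ u) ∪ thickening δ (S ∩ v) :=
    thickening_union δ (S ∩ u) (S ∩ v) ▸ hTS.trans (thickening_subset_of_subset δ hSAB)
  obtain ⟨x, -, hxA, hxB⟩ := hTconn _ _ isOpen_thickening isOpen_thickening hTAB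
    (inter_thickening_nonempty_of_subset_thickening (inter_subset_left.trans hST) hA)
    (inter_thickening_nonempty_of_subset_thickening (inter_subset_left.trans hST) hB)
  exact hdisjδ.ne_of_mem hxA hxB rfl

/-- Topological core of Lemma 3.2: if nonempty compact connected sets `K i` converge
to a nonempty compact set `K` in Hausdorff distance, then `K` is connected. -/
theorem stmt_4 {X : Type*} [MetricSpace X]
    (K : ℕ → Set X) (hKcpt : ∀ i, IsCompact (K i)) (hKconn : ∀ i, IsConnected (K i))
    (S : Set X) (hScpt : IsCompact S) (hSne : S.Nonempty)
    (hconv : Tendsto (fun i => Metric.hausdorffDist (K i) S) atTop (nhds 0)) :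
    IsConnected S := by
  refine ⟨hSne, hScpt.isPreconnected_of_forall_thickening fun δ hδ => ?_⟩
  obtain ⟨i, hi⟩ := (hconv.eventually (gt_mem_nhds hδ)).exists
  have fin : hausdorffEDist (K i) S ≠ ⊤ := hausdorffEDist_ne_top_of_nonempty_of_bounded
    (hKconn i).nonempty hSne (hKcpt i).isBounded hScpt.isBounded
  exact ⟨K i, (hKconn i).isPreconnected, subset_thickening_of_hausdorffDist_lt hi fin,
    subset_thickening_of_hausdorffDist_lt' hi fin⟩
end
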